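/- arXiv:2112.08465 — 2 statements merged into one kernel-verified Lean document; each statement's English description precedes it below -/
import Mathlib

section
/- Let (V,⟨·,·⟩) be a real inner product space of dimension n, and suppose V = V₁ ⊕ V₂ is an orthogonal direct sum with dim V₁ = k ≥ 1 and dim V₂ = n - k ≥ 1. Let R be an algebraic curvature tensor on V such that R(x,y,z,w) = 0 whenever x ∈ V₁ and y ∈ V₂ (so R is the curvature tensor of a Riemannian product). If R has (k(n-k)+1)-nonnegative curvature operator of the second kind, then R vanishes identically. -/
open scoped RealInnerProductSpace

variable {V : Type*} [NormedAddCommGroup V] [InnerProductSpace ℝ V]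

/-- `R` is an algebraic curvature tensor: antisymmetric in the first two slots,
symmetric under exchange of the first and second pairs, and satisfying the
first Bianchi identity. -/
def IsAlgCurvatureTensor (R : V →ₗ[ℝ] V →ₗ[ℝ] V →ₗ[ℝ] V →ₗ[ℝ] ℝ) : Prop :=
  (∀ x y z w : V, R x y z w = - R y x z w) ∧
  (∀ x y z w : V, R x y z w = R z w x y) ∧
  (∀ x y z w : V, R x y z w + R y z x w + R z x y w = 0)

/-- The Ricci curvature `Ric(x,y) = Σ_j R(x,e_j,y,e_j)` with respect to an
orthonormal basis. -/
noncomputable def ricci {n : ℕ} (b : OrthonormalBasis (Fin n) ℝ V)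
    (R : V →ₗ[ℝ] V →ₗ[ℝ] V →ₗ[ℝ] V →ₗ[ℝ] ℝ) (x y : V) : ℝ :=
  ∑ j, R x (b j) y (b j)

/-- The scalar curvature `S = Σ_{i,j} R_{ijij}`. -/
noncomputable def scalarCurv {n : ℕ} (b : OrthonormalBasis (Fin n) ℝ V)
    (R : V →ₗ[ℝ] V →ₗ[ℝ] V →ₗ[ℝ] V →ₗ[ℝ] ℝ) : ℝ :=
  ∑ i, ∑ j, R (b i) (b j) (b i) (b j)

/-- `φ` is a symmetric bilinear form which is traceless with respect to the
orthonormal basis `b`. -/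
def IsTracelessSymForm {n : ℕ} (b : OrthonormalBasis (Fin n) ℝ V)
    (φ : V →ₗ[ℝ] V →ₗ[ℝ] ℝ) : Prop :=
  (∀ x y : V, φ x y = φ y x) ∧ (∑ i, φ (b i) (b i) = 0)

/-- The inner product `⟨φ,ψ⟩ = Σ_{i,j} φ(e_i,e_j) ψ(e_i,e_j)` of bilinear forms. -/
noncomputable def formInner {n : ℕ} (b : OrthonormalBasis (Fin n) ℝ V)
    (φ ψ : V →ₗ[ℝ] V →ₗ[ℝ] ℝ) : ℝ :=
  ∑ i, ∑ j, φ (b i) (b j) * ψ (b i) (b j)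

/-- The curvature operator of the second kind
`R̊(φ,ψ) = Σ_{i,j,k,l} R_{ijkl} φ(e_i,e_l) ψ(e_j,e_k)`. -/
noncomputable def secondKind {n : ℕ} (b : OrthonormalBasis (Fin n) ℝ V)
    (R : V →ₗ[ℝ] V →ₗ[ℝ] V →ₗ[ℝ] V →ₗ[ℝ] ℝ)
    (φ ψ : V →ₗ[ℝ] V →ₗ[ℝ] ℝ) : ℝ :=
  ∑ i, ∑ j, ∑ k, ∑ l,
    R (b i) (b j) (b k) (b l) * φ (b i) (b l) * ψ (b j) (b k)

/-- `R` has `k`-nonnegative curvature operator of the second kind: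
`Σ_{a=1}^k R̊(φ_a,φ_a) ≥ 0` for every orthonormal `k`-tuple of traceless
symmetric bilinear forms. -/
def kNonnegSecondKind {n : ℕ} (b : OrthonormalBasis (Fin n) ℝ V)
    (R : V →ₗ[ℝ] V →ₗ[ℝ] V →ₗ[ℝ] V →ₗ[ℝ] ℝ) (k : ℕ) : Prop :=
  ∀ φ : Fin k → (V →ₗ[ℝ] V →ₗ[ℝ] ℝ),
    (∀ a, IsTracelessSymForm b (φ a)) →
    (∀ a a', formInner b (φ a) (φ a') = if a = a' then 1 else 0) →
    0 ≤ ∑ a, secondKind b R (φ a) (φ a)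

/-- `R` has `k`-positive curvature operator of the second kind:
`Σ_{a=1}^k R̊(φ_a,φ_a) > 0` for every orthonormal `k`-tuple of traceless
symmetric bilinear forms. -/
def kPosSecondKind {n : ℕ} (b : OrthonormalBasis (Fin n) ℝ V)
    (R : V →ₗ[ℝ] V →ₗ[ℝ] V →ₗ[ℝ] V →ₗ[ℝ] ℝ) (k : ℕ) : Prop :=
  ∀ φ : Fin k → (V →ₗ[ℝ] V →ₗ[ℝ] ℝ),
    (∀ a, IsTracelessSymForm b (φ a)) →
    (∀ a a', formInner b (φ a) (φ a') = if a = a' then 1 else 0) →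
    0 < ∑ a, secondKind b R (φ a) (φ a)

/-!
Let `e_p`, `f_q` be orthonormal bases of `V₁`, `V₂`. After scaling, the `k(n-k)` forms
`e_p ⊙ f_q` are orthonormal and traceless, and `R̊` vanishes on them because `R` is a product.
So `(k(n-k)+1)`-nonnegativity forces `R̊(φ, φ) ≥ 0` for every traceless symmetric `φ` orthogonal
to them, i.e. every such `φ` vanishing on `V₁ × V₂`. Testing `φ = x ⊙ y` for orthogonal `x, y`
in one factor gives `R(x, y, x, y) ≥ 0`. Testing `φ = (n-k) g₁ - k g₂`, with `gᵢ` the metric of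
`Vᵢ`, gives `(n-k)² S₁ + k² S₂ ≤ 0` for the sums `Sᵢ = Σ R(e_p, e_p', e_p, e_p')` over
orthonormal bases of the factors. These sums consist of nonnegative terms, so every term
vanishes: `R(x, y, x, y) = 0` within each factor, and polarization and the product structure
give `R = 0`.
-/

open LinearMap (BilinForm)

noncomputable def symProd (x y : V) : BilinForm ℝ V :=
  LinearMap.mk₂ ℝ (fun a c => ⟪a, x⟫ * ⟪c, y⟫ + ⟪a, y⟫ * ⟪c, x⟫)
    (fun a a' c => by simp only [inner_add_left]; ring)
    (fun r a c => by simp only [real_inner_smul_left, smul_eq_mul]; ring)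
    (fun a c c' => by simp only [inner_add_left]; ring)
    (fun r a c => by simp only [real_inner_smul_left, smul_eq_mul]; ring)

@[simp] lemma symProd_apply (x y a c : V) :
    symProd x y a c = ⟪a, x⟫ * ⟪c, y⟫ + ⟪a, y⟫ * ⟪c, x⟫ := rfl

lemma symProd_apply_comm (x y a c : V) : symProd x y a c = symProd x y c a := by
  simp only [symProd_apply]; ring

section OrthonormalBasis

variable {n : ℕ} (b : OrthonormalBasis (Fin n) ℝ V) (R : V →ₗ[ℝ] V →ₗ[ℝ] V →ₗ[ℝ] V →ₗ[ℝ] ℝ)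

lemma OrthonormalBasis.bilin_apply_eq_sum (φ : BilinForm ℝ V) (x y : V) :
    φ x y = ∑ i, ∑ j, φ (b i) (b j) * (⟪b i, x⟫ * ⟪b j, y⟫) := by
  conv_lhs => rw [← b.sum_repr' x, ← b.sum_repr' y]
  simp only [map_sum, map_smul, LinearMap.sum_apply, LinearMap.smul_apply, smul_eq_mul,
    Finset.mul_sum]
  rw [Finset.sum_comm]
  exact Finset.sum_congr rfl fun i _ => Finset.sum_congr rfl fun j _ => by ring

lemma formInner_comm (φ ψ : BilinForm ℝ V) : formInner b φ ψ = formInner b ψ φ := by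
  simp only [formInner, mul_comm]

lemma formInner_symProd (φ : BilinForm ℝ V) (x y : V) :
    formInner b φ (symProd x y) = φ x y + φ y x := by
  simp only [formInner, symProd_apply, mul_add, Finset.sum_add_distrib]
  rw [← b.bilin_apply_eq_sum, ← b.bilin_apply_eq_sum]

lemma formInner_symProd_symProd (x y z w : V) :
    formInner b (symProd x y) (symProd z w) = 2 * (⟪x, z⟫ * ⟪y, w⟫ + ⟪x, w⟫ * ⟪y, z⟫) := by
  rw [formInner_comm, formInner_symProd]
  simp only [symProd_apply]
  ring

lemma trace_symProd (x y : V) : ∑ i, symProd x y (b i) (b i) = 2 * ⟪x, y⟫ := by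
  have parseval (x y : V) : ∑ i, ⟪b i, x⟫ * ⟪b i, y⟫ = ⟪x, y⟫ := by
    simpa only [real_inner_comm x] using b.sum_inner_mul_inner x y
  simp only [symProd_apply, Finset.sum_add_distrib, parseval, real_inner_comm y x]
  ring

lemma isTracelessSymForm_symProd {x y : V} (hxy : ⟪x, y⟫ = 0) :
    IsTracelessSymForm b (symProd x y) :=
  ⟨symProd_apply_comm x y, by rw [trace_symProd, hxy, mul_zero]⟩

lemma secondKind_symProd_right (φ : BilinForm ℝ V) (z w : V) :
    secondKind b R φ (symProd z w) = formInner b φ ((R.flip z).flip w + (R.flip w).flip z) := by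
  have inner_sum (i l : Fin n) :
      ∑ j, ∑ k, R (b i) (b j) (b k) (b l) * symProd z w (b j) (b k)
        = R (b i) z w (b l) + R (b i) w z (b l) :=
    formInner_symProd b ((R (b i)).compr₂ (LinearMap.applyₗ (b l))) z w
  simp only [secondKind, formInner, LinearMap.add_apply, LinearMap.flip_apply, ← inner_sum,
    Finset.mul_sum]
  refine Finset.sum_congr rfl fun i _ => ?_
  conv_rhs => rw [Finset.sum_comm]
  refine Finset.sum_congr rfl fun j _ => ?_
  conv_rhs => rw [Finset.sum_comm]
  exact Finset.sum_congr rfl fun k _ => Finset.sum_congr rfl fun l _ => by ring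

lemma secondKind_symProd_symProd (x y z w : V) :
    secondKind b R (symProd x y) (symProd z w)
      = R x z w y + R x w z y + R y z w x + R y w z x := by
  rw [secondKind_symProd_right, formInner_comm, formInner_symProd]
  simp only [LinearMap.add_apply, LinearMap.flip_apply]
  ring

noncomputable def secondKindBilin :
    (V →ₗ[ℝ] V →ₗ[ℝ] ℝ) →ₗ[ℝ] (V →ₗ[ℝ] V →ₗ[ℝ] ℝ) →ₗ[ℝ] ℝ :=
  LinearMap.mk₂ ℝ (secondKind b R)
    (fun _ _ _ => by simp only [secondKind, LinearMap.add_apply, mul_add, add_mul,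
      Finset.sum_add_distrib])
    (fun _ _ _ => by
      simp only [secondKind, LinearMap.smul_apply, smul_eq_mul, Finset.mul_sum]
      exact Finset.sum_congr rfl fun _ _ => Finset.sum_congr rfl fun _ _ =>
        Finset.sum_congr rfl fun _ _ => Finset.sum_congr rfl fun _ _ => by ring)
    (fun _ _ _ => by simp only [secondKind, LinearMap.add_apply, mul_add, Finset.sum_add_distrib])
    (fun _ _ _ => by
      simp only [secondKind, LinearMap.smul_apply, smul_eq_mul, Finset.mul_sum]
      exact Finset.sum_congr rfl fun _ _ => Finset.sum_congr rfl fun _ _ =>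
        Finset.sum_congr rfl fun _ _ => Finset.sum_congr rfl fun _ _ => by ring)

lemma secondKindBilin_apply (φ ψ : BilinForm ℝ V) :
    secondKindBilin b R φ ψ = secondKind b R φ ψ := rfl

lemma formInner_self_nonneg (φ : BilinForm ℝ V) : 0 ≤ formInner b φ φ :=
  Finset.sum_nonneg fun _ _ => Finset.sum_nonneg fun _ _ => mul_self_nonneg _

lemma formInner_self_pos {φ : BilinForm ℝ V} (hφ : φ ≠ 0) : 0 < formInner b φ φ := by
  refine (formInner_self_nonneg b φ).lt_of_ne' fun h => hφ ?_
  have hsq (i j : Fin n) : φ (b i) (b j) * φ (b i) (b j) = 0 :=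
    (Finset.sum_eq_zero_iff_of_nonneg fun _ _ => mul_self_nonneg _).1
      ((Finset.sum_eq_zero_iff_of_nonneg fun _ _ =>
        Finset.sum_nonneg fun _ _ => mul_self_nonneg _).1 h i (Finset.mem_univ _))
      j (Finset.mem_univ _)
  refine LinearMap.ext_basis b.toBasis b.toBasis fun i j => ?_
  simpa using hsq i j

noncomputable def unitForm (φ : BilinForm ℝ V) : BilinForm ℝ V :=
  (√(formInner b φ φ))⁻¹ • φ

lemma formInner_unitForm_left (φ ψ : BilinForm ℝ V) :
    formInner b (unitForm b φ) ψ = (√(formInner b φ φ))⁻¹ * formInner b φ ψ := by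
  simp only [unitForm, formInner, LinearMap.smul_apply, smul_eq_mul, Finset.mul_sum, mul_assoc]

lemma formInner_unitForm_right (φ ψ : BilinForm ℝ V) :
    formInner b φ (unitForm b ψ) = (√(formInner b ψ ψ))⁻¹ * formInner b φ ψ := by
  rw [formInner_comm, formInner_unitForm_left, formInner_comm b ψ φ]

lemma formInner_unitForm_self {φ : BilinForm ℝ V} (hφ : φ ≠ 0) :
    formInner b (unitForm b φ) (unitForm b φ) = 1 := by
  have hpos := formInner_self_pos b hφ
  rw [formInner_unitForm_left, formInner_unitForm_right, ← mul_assoc,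
    ← mul_inv, Real.mul_self_sqrt hpos.le, inv_mul_cancel₀ hpos.ne']

lemma formInner_unitForm_of_orthogonal {ι : Type*} [DecidableEq ι] {ψ : ι → BilinForm ℝ V}
    (hψ0 : ∀ a, ψ a ≠ 0) (hψψ : ∀ a a', a ≠ a' → formInner b (ψ a) (ψ a') = 0) (a a' : ι) :
    formInner b (unitForm b (ψ a)) (unitForm b (ψ a')) = if a = a' then 1 else 0 := by
  split_ifs with h
  · subst h; exact formInner_unitForm_self b (hψ0 a)
  · rw [formInner_unitForm_left, formInner_unitForm_right, hψψ a a' h, mul_zero, mul_zero]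

lemma secondKind_unitForm_self (φ : BilinForm ℝ V) :
    secondKind b R (unitForm b φ) (unitForm b φ) = (formInner b φ φ)⁻¹ * secondKind b R φ φ := by
  simp only [unitForm, ← secondKindBilin_apply, map_smul, LinearMap.smul_apply, smul_eq_mul,
    ← mul_assoc, ← mul_inv, Real.mul_self_sqrt (formInner_self_nonneg b φ)]

lemma IsTracelessSymForm.smul {φ : BilinForm ℝ V} (hφ : IsTracelessSymForm b φ) (c : ℝ) :
    IsTracelessSymForm b (c • φ) :=
  ⟨fun x y => by simp only [LinearMap.smul_apply, hφ.1 x y],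
    by simp only [LinearMap.smul_apply, smul_eq_mul, ← Finset.mul_sum, hφ.2, mul_zero]⟩

theorem kNonnegSecondKind.secondKind_self_nonneg {N : ℕ} (hnn : kNonnegSecondKind b R (N + 1))
    {ψ : Fin N → BilinForm ℝ V} (hψ : ∀ a, IsTracelessSymForm b (ψ a))
    (hψψ : ∀ a a', formInner b (ψ a) (ψ a') = if a = a' then 1 else 0)
    (hψR : ∀ a, secondKind b R (ψ a) (ψ a) = 0)
    {φ : BilinForm ℝ V} (hφ : IsTracelessSymForm b φ) (hψφ : ∀ a, formInner b (ψ a) φ = 0) :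
    0 ≤ secondKind b R φ φ := by
  rcases eq_or_ne φ 0 with rfl | hφ0
  · simp [secondKind]
  have hφψ (a : Fin N) : formInner b (unitForm b φ) (ψ a) = 0 := by
    rw [formInner_unitForm_left, formInner_comm b φ (ψ a), hψφ, mul_zero]
  have hsum := hnn (Fin.snoc ψ (unitForm b φ))
    (Fin.lastCases (by rw [Fin.snoc_last]; exact hφ.smul b _) (by simpa using hψ))
    (Fin.lastCases
      (Fin.lastCases (by simpa using formInner_unitForm_self b hφ0)
        (by simpa [eq_comm (a := Fin.last N)] using hφψ))
      fun a => Fin.lastCases (by simpa [formInner_comm b (ψ a)] using hφψ a)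
        (by simpa using hψψ a))
  rw [Fin.sum_univ_castSucc] at hsum
  simp only [Fin.snoc_castSucc, Fin.snoc_last, hψR, Finset.sum_const_zero, zero_add,
    secondKind_unitForm_self] at hsum
  exact (mul_nonneg_iff_of_pos_left (inv_pos.2 (formInner_self_pos b hφ0))).1 hsum

end OrthonormalBasis

namespace IsAlgCurvatureTensor

variable {R : V →ₗ[ℝ] V →ₗ[ℝ] V →ₗ[ℝ] V →ₗ[ℝ] ℝ}

lemma apply_self_left (hR : IsAlgCurvatureTensor R) (x z w : V) : R x x z w = 0 := by
  linarith [hR.1 x x z w]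

lemma apply_swap_right (hR : IsAlgCurvatureTensor R) (x y z w : V) : R x y z w = - R x y w z := by
  rw [hR.2.1 x y z w, hR.1 z w x y, hR.2.1 w z x y]

lemma apply_self_right (hR : IsAlgCurvatureTensor R) (x y z : V) : R x y z z = 0 := by
  linarith [hR.apply_swap_right x y z z]

lemma apply_swap_swap (hR : IsAlgCurvatureTensor R) (x y : V) : R y x y x = R x y x y := by
  rw [hR.1 y x y x, hR.apply_swap_right x y y x, neg_neg]

end IsAlgCurvatureTensor

section Polarization

variable {R : V →ₗ[ℝ] V →ₗ[ℝ] V →ₗ[ℝ] V →ₗ[ℝ] ℝ} {W : Submodule ℝ V}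

lemma apply_eq_zero_of_inner_eq_zero
    (h : ∀ x ∈ W, ∀ y ∈ W, ‖x‖ = 1 → ‖y‖ = 1 → ⟪x, y⟫ = 0 → R x y x y = 0)
    {x y : V} (hx : x ∈ W) (hy : y ∈ W) (hxy : ⟪x, y⟫ = 0) : R x y x y = 0 := by
  rcases eq_or_ne x 0 with rfl | hx0
  · simp
  rcases eq_or_ne y 0 with rfl | hy0
  · simp
  have h₁ := h _ (W.smul_mem ‖x‖⁻¹ hx) _ (W.smul_mem ‖y‖⁻¹ hy) (norm_smul_inv_norm hx0)
    (norm_smul_inv_norm hy0) (by rw [real_inner_smul_left, real_inner_smul_right, hxy]; ring)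
  simp only [map_smul, LinearMap.smul_apply, smul_eq_mul] at h₁
  simpa [hx0, hy0] using h₁

namespace IsAlgCurvatureTensor

lemma apply_self_eq_zero_of_orthonormal (hR : IsAlgCurvatureTensor R)
    (h : ∀ x ∈ W, ∀ y ∈ W, ‖x‖ = 1 → ‖y‖ = 1 → ⟪x, y⟫ = 0 → R x y x y = 0)
    {x y : V} (hx : x ∈ W) (hy : y ∈ W) : R x y x y = 0 := by
  rcases eq_or_ne x 0 with rfl | hx0
  · simp
  set c := ⟪x, y⟫ / ⟪x, x⟫
  have hshift : R x y x y = R x (y - c • x) x (y - c • x) := by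
    simp only [map_sub, map_smul, LinearMap.sub_apply, LinearMap.smul_apply, smul_eq_mul,
      hR.apply_self_left, hR.apply_self_right]
    ring
  rw [hshift]
  refine apply_eq_zero_of_inner_eq_zero h hx (W.sub_mem hy (W.smul_mem c hx)) ?_
  rw [inner_sub_right, real_inner_smul_right, div_mul_cancel₀ _ (inner_self_ne_zero.2 hx0),
    sub_self]

lemma apply_eq_zero_of_apply_self (hR : IsAlgCurvatureTensor R)
    (h : ∀ x ∈ W, ∀ y ∈ W, R x y x y = 0) :
    ∀ x ∈ W, ∀ y ∈ W, ∀ z ∈ W, ∀ w ∈ W, R x y z w = 0 := by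
  have h₁ : ∀ x ∈ W, ∀ y ∈ W, ∀ z ∈ W, R x y x z = 0 := by
    intro x hx y hy z hz
    have e := h x hx (y + z) (W.add_mem hy hz)
    simp only [map_add, LinearMap.add_apply, h x hx y hy, h x hx z hz, hR.2.1 x z x y] at e
    linarith
  have h₂ : ∀ x ∈ W, ∀ y ∈ W, ∀ z ∈ W, ∀ w ∈ W, R x y z w = - R z y x w := by
    intro x hx y hy z hz w hw
    have e := h₁ (x + z) (W.add_mem hx hz) y hy w hw
    simp only [map_add, LinearMap.add_apply, h₁ x hx y hy w hw, h₁ z hz y hy w hw] at e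
    linarith
  intro x hx y hy z hz w hw
  have hxyz : R x y z w = R y z x w := by
    rw [h₂ x hx y hy z hz w hw, hR.1 z y x w, neg_neg]
  have hyzx : R y z x w = R z x y w := by
    rw [h₂ y hy z hz x hx w hw, hR.1 x z y w, neg_neg]
  linarith [hR.2.2 x y z w]

end IsAlgCurvatureTensor

end Polarization

section SymSqSum

variable {ι : Type*} [Fintype ι]

-- For an orthonormal basis `w` of a subspace, this is twice the metric of that subspace.
noncomputable def symSqSum (w : ι → V) : BilinForm ℝ V :=
  ∑ p, symProd (w p) (w p)

lemma symSqSum_apply (w : ι → V) (x y : V) :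
    symSqSum w x y = 2 * ∑ p, ⟪x, w p⟫ * ⟪y, w p⟫ := by
  simp only [symSqSum, LinearMap.sum_apply, symProd_apply, Finset.mul_sum]
  exact Finset.sum_congr rfl fun _ _ => by ring

lemma symSqSum_apply_comm (w : ι → V) (x y : V) : symSqSum w x y = symSqSum w y x := by
  simp only [symSqSum_apply, mul_comm ⟪x, _⟫]

lemma trace_symSqSum {n : ℕ} (b : OrthonormalBasis (Fin n) ℝ V) {w : ι → V}
    (hw : ∀ p, ‖w p‖ = 1) : ∑ i, symSqSum w (b i) (b i) = 2 * Fintype.card ι := by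
  simp only [symSqSum, LinearMap.sum_apply]
  rw [Finset.sum_comm]
  simp only [trace_symProd, real_inner_self_eq_norm_sq, hw, ← Finset.mul_sum]
  simp

lemma secondKind_symSqSum {n : ℕ} (b : OrthonormalBasis (Fin n) ℝ V)
    (R : V →ₗ[ℝ] V →ₗ[ℝ] V →ₗ[ℝ] V →ₗ[ℝ] ℝ) (w : ι → V) {κ : Type*} [Fintype κ] (w' : κ → V) :
    secondKind b R (symSqSum w) (symSqSum w') = 4 * ∑ p, ∑ q, R (w p) (w' q) (w' q) (w p) := by
  rw [← secondKindBilin_apply]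
  simp only [symSqSum, map_sum, LinearMap.sum_apply, secondKindBilin_apply,
    secondKind_symProd_symProd, Finset.mul_sum]
  rw [Finset.sum_comm]
  exact Finset.sum_congr rfl fun _ _ => Finset.sum_congr rfl fun _ _ => by ring

noncomputable def curvatureSum (R : V →ₗ[ℝ] V →ₗ[ℝ] V →ₗ[ℝ] V →ₗ[ℝ] ℝ) (w : ι → V) : ℝ :=
  ∑ p, ∑ p', R (w p) (w p') (w p) (w p')

lemma secondKind_symSqSum_self {n : ℕ} (b : OrthonormalBasis (Fin n) ℝ V)
    {R : V →ₗ[ℝ] V →ₗ[ℝ] V →ₗ[ℝ] V →ₗ[ℝ] ℝ} (hR : IsAlgCurvatureTensor R) (w : ι → V) :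
    secondKind b R (symSqSum w) (symSqSum w) = -4 * curvatureSum R w := by
  simp only [secondKind_symSqSum, curvatureSum, Finset.mul_sum]
  exact Finset.sum_congr rfl fun p _ => Finset.sum_congr rfl fun p' _ => by
    rw [hR.apply_swap_right (w p) (w p') (w p') (w p)]; ring

end SymSqSum

section CurvatureSum

variable {ι : Type*} {R : V →ₗ[ℝ] V →ₗ[ℝ] V →ₗ[ℝ] V →ₗ[ℝ] ℝ} {w : ι → V}

lemma apply_nonneg_of_ne_nonneg (hR : IsAlgCurvatureTensor R)
    (h : ∀ p p', p ≠ p' → 0 ≤ R (w p) (w p') (w p) (w p')) (p p' : ι) :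
    0 ≤ R (w p) (w p') (w p) (w p') := by
  rcases eq_or_ne p p' with rfl | hpp
  · rw [hR.apply_self_left]
  · exact h p p' hpp

lemma curvatureSum_nonneg [Fintype ι] (hR : IsAlgCurvatureTensor R)
    (h : ∀ p p', p ≠ p' → 0 ≤ R (w p) (w p') (w p) (w p')) : 0 ≤ curvatureSum R w :=
  Finset.sum_nonneg fun p _ => Finset.sum_nonneg fun p' _ => apply_nonneg_of_ne_nonneg hR h p p'

lemma apply_le_curvatureSum [Fintype ι] (hR : IsAlgCurvatureTensor R)
    (h : ∀ p p', p ≠ p' → 0 ≤ R (w p) (w p') (w p) (w p')) (p p' : ι) :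
    R (w p) (w p') (w p) (w p') ≤ curvatureSum R w :=
  calc R (w p) (w p') (w p) (w p') ≤ ∑ q', R (w p) (w q') (w p) (w q') :=
        Finset.single_le_sum (fun q' _ => apply_nonneg_of_ne_nonneg hR h p q')
          (Finset.mem_univ p')
    _ ≤ curvatureSum R w :=
        Finset.single_le_sum (f := fun q => ∑ q', R (w q) (w q') (w q) (w q'))
          (fun q _ => Finset.sum_nonneg fun q' _ => apply_nonneg_of_ne_nonneg hR h q q')
          (Finset.mem_univ p)

end CurvatureSum

structure IsProductCurvature (R : V →ₗ[ℝ] V →ₗ[ℝ] V →ₗ[ℝ] V →ₗ[ℝ] ℝ)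
    (V₁ V₂ : Submodule ℝ V) : Prop where
  isAlgCurvatureTensor : IsAlgCurvatureTensor R
  isOrtho : V₁ ⟂ V₂
  apply_eq_zero : ∀ x ∈ V₁, ∀ y ∈ V₂, ∀ z w : V, R x y z w = 0

namespace IsProductCurvature

variable {R : V →ₗ[ℝ] V →ₗ[ℝ] V →ₗ[ℝ] V →ₗ[ℝ] ℝ} {V₁ V₂ : Submodule ℝ V}

lemma symm (hP : IsProductCurvature R V₁ V₂) : IsProductCurvature R V₂ V₁ where
  isAlgCurvatureTensor := hP.isAlgCurvatureTensor
  isOrtho := hP.isOrtho.symm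
  apply_eq_zero x hx y hy z w := by
    rw [hP.isAlgCurvatureTensor.1, hP.apply_eq_zero y hy x hx, neg_zero]

lemma inner_eq_zero (hP : IsProductCurvature R V₁ V₂) {x y : V} (hx : x ∈ V₁) (hy : y ∈ V₂) :
    ⟪x, y⟫ = 0 :=
  Submodule.isOrtho_iff_inner_eq.1 hP.isOrtho x hx y hy

theorem secondKind_self_nonneg {n : ℕ} (b : OrthonormalBasis (Fin n) ℝ V)
    (hP : IsProductCurvature R V₁ V₂)
    (hnn : kNonnegSecondKind b R (Module.finrank ℝ V₁ * Module.finrank ℝ V₂ + 1))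
    {φ : BilinForm ℝ V} (hφ : IsTracelessSymForm b φ)
    (hφ₁₂ : ∀ x ∈ V₁, ∀ y ∈ V₂, φ x y = 0) :
    0 ≤ secondKind b R φ φ := by
  have : FiniteDimensional ℝ V := b.toBasis.finiteDimensional_of_finite
  have hR := hP.isAlgCurvatureTensor
  let u := stdOrthonormalBasis ℝ V₁
  let v := stdOrthonormalBasis ℝ V₂
  let pair (a : Fin (Module.finrank ℝ V₁ * Module.finrank ℝ V₂)) : V × V :=
    ((u (finProdFinEquiv.symm a).1 : V), (v (finProdFinEquiv.symm a).2 : V))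
  have hmem (a) : (pair a).1 ∈ V₁ ∧ (pair a).2 ∈ V₂ := ⟨(u _).2, (v _).2⟩
  have hpair (a a') : formInner b (symProd (pair a).1 (pair a).2) (symProd (pair a').1 (pair a').2)
      = if a = a' then 2 else 0 := by
    rw [formInner_symProd_symProd, hP.inner_eq_zero (hmem a).1 (hmem a').2]
    simp only [pair, ← Submodule.coe_inner, orthonormal_iff_ite.1 u.orthonormal,
      orthonormal_iff_ite.1 v.orthonormal, ite_zero_mul_ite_zero, ← Prod.ext_iff,
      EmbeddingLike.apply_eq_iff_eq]
    split_ifs <;> norm_num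
  refine hnn.secondKind_self_nonneg b R (ψ := fun a => unitForm b (symProd (pair a).1 (pair a).2))
    (fun a => (isTracelessSymForm_symProd b (hP.inner_eq_zero (hmem a).1 (hmem a).2)).smul b _)
    (formInner_unitForm_of_orthogonal b ?_ ?_) (fun a => ?_) hφ (fun a => ?_)
  · intro a h
    have := hpair a a
    simp [h, formInner] at this
  · intro a a' h
    rw [hpair, if_neg h]
  · rw [secondKind_unitForm_self, secondKind_symProd_symProd, hR.apply_self_left,
      hR.apply_self_right, hP.apply_eq_zero _ (hmem a).1 _ (hmem a).2,
      hP.symm.apply_eq_zero _ (hmem a).2 _ (hmem a).1]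
    simp
  · rw [formInner_unitForm_left]
    refine mul_eq_zero_of_right _ ?_
    rw [formInner_comm, formInner_symProd, hφ.1 (pair a).2, hφ₁₂ _ (hmem a).1 _ (hmem a).2,
      add_zero]

theorem apply_nonneg {n : ℕ} (b : OrthonormalBasis (Fin n) ℝ V) (hP : IsProductCurvature R V₁ V₂)
    (hnn : kNonnegSecondKind b R (Module.finrank ℝ V₁ * Module.finrank ℝ V₂ + 1))
    {x y : V} (hx : x ∈ V₁) (hy : y ∈ V₁) (hxy : ⟪x, y⟫ = 0) :
    0 ≤ R x y x y := by
  have hR := hP.isAlgCurvatureTensor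
  have h := hP.secondKind_self_nonneg b hnn (isTracelessSymForm_symProd b hxy)
    fun a _ c hc => by
      rw [symProd_apply, hP.symm.inner_eq_zero hc hx, hP.symm.inner_eq_zero hc hy]
      ring
  rw [secondKind_symProd_symProd, hR.apply_self_left, hR.apply_self_right,
    hR.apply_swap_swap x y] at h
  linarith

lemma secondKind_symSqSum_eq_zero {n : ℕ} (b : OrthonormalBasis (Fin n) ℝ V)
    (hP : IsProductCurvature R V₁ V₂) {ι κ : Type*} [Fintype ι] [Fintype κ]
    {w : ι → V} {w' : κ → V} (hw : ∀ p, w p ∈ V₁) (hw' : ∀ q, w' q ∈ V₂) :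
    secondKind b R (symSqSum w) (symSqSum w') = 0 := by
  simp [secondKind_symSqSum, hP.apply_eq_zero _ (hw _) _ (hw' _)]

theorem curvatureSum_combination_nonpos {n : ℕ} (b : OrthonormalBasis (Fin n) ℝ V)
    (hP : IsProductCurvature R V₁ V₂)
    (hnn : kNonnegSecondKind b R (Module.finrank ℝ V₁ * Module.finrank ℝ V₂ + 1))
    {ι₁ ι₂ : Type*} [Fintype ι₁] [Fintype ι₂]
    (w₁ : OrthonormalBasis ι₁ ℝ V₁) (w₂ : OrthonormalBasis ι₂ ℝ V₂) :
    (Fintype.card ι₂ : ℝ) ^ 2 * curvatureSum R (fun p => (w₁ p : V))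
      + (Fintype.card ι₁ : ℝ) ^ 2 * curvatureSum R (fun q => (w₂ q : V)) ≤ 0 := by
  have hR := hP.isAlgCurvatureTensor
  set e₁ : ι₁ → V := fun p => w₁ p
  set e₂ : ι₂ → V := fun q => w₂ q
  have hφ : IsTracelessSymForm b
      ((Fintype.card ι₂ : ℝ) • symSqSum e₁ + (-Fintype.card ι₁ : ℝ) • symSqSum e₂) := by
    refine ⟨fun x y => by simp only [LinearMap.add_apply, LinearMap.smul_apply,
      symSqSum_apply_comm _ x], ?_⟩
    simp only [LinearMap.add_apply, LinearMap.smul_apply, smul_eq_mul, Finset.sum_add_distrib,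
      ← Finset.mul_sum, trace_symSqSum b (w := e₁) w₁.norm_eq_one,
      trace_symSqSum b (w := e₂) w₂.norm_eq_one]
    ring
  have h := hP.secondKind_self_nonneg b hnn hφ fun x hx y hy => by
    simp [e₁, e₂, symSqSum_apply, hP.inner_eq_zero hx (w₂ _).2,
      hP.symm.inner_eq_zero hy (w₁ _).2]
  rw [← secondKindBilin_apply] at h
  simp only [map_add, map_smul, LinearMap.add_apply, LinearMap.smul_apply, smul_eq_mul] at h
  have h₁₂ : secondKind b R (symSqSum e₁) (symSqSum e₂) = 0 :=
    hP.secondKind_symSqSum_eq_zero b (fun p => (w₁ p).2) (fun q => (w₂ q).2)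
  have h₂₁ : secondKind b R (symSqSum e₂) (symSqSum e₁) = 0 :=
    hP.symm.secondKind_symSqSum_eq_zero b (fun q => (w₂ q).2) (fun p => (w₁ p).2)
  simp only [secondKindBilin_apply, secondKind_symSqSum_self b hR, h₁₂, h₂₁] at h
  linarith

lemma apply_basis_nonneg {n : ℕ} (b : OrthonormalBasis (Fin n) ℝ V)
    (hP : IsProductCurvature R V₁ V₂)
    (hnn : kNonnegSecondKind b R (Module.finrank ℝ V₁ * Module.finrank ℝ V₂ + 1))
    {ι : Type*} [Fintype ι] (w : OrthonormalBasis ι ℝ V₁) :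
    ∀ p p', p ≠ p' → 0 ≤ R (w p) (w p') (w p) (w p') := fun p p' h =>
  hP.apply_nonneg b hnn (w p).2 (w p').2 (by rw [← Submodule.coe_inner, w.orthonormal.2 h])

theorem curvatureSum_nonpos {n : ℕ} (b : OrthonormalBasis (Fin n) ℝ V)
    (hP : IsProductCurvature R V₁ V₂)
    (hnn : kNonnegSecondKind b R (Module.finrank ℝ V₁ * Module.finrank ℝ V₂ + 1))
    (h₂ : 0 < Module.finrank ℝ V₂) {ι : Type*} [Fintype ι] (w : OrthonormalBasis ι ℝ V₁) :
    curvatureSum R (fun p => (w p : V)) ≤ 0 := by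
  have : FiniteDimensional ℝ V := b.toBasis.finiteDimensional_of_finite
  let w₂ := stdOrthonormalBasis ℝ V₂
  have hcomb := hP.curvatureSum_combination_nonpos b hnn w w₂
  rw [Fintype.card_fin] at hcomb
  have hnn' : kNonnegSecondKind b R (Module.finrank ℝ V₂ * Module.finrank ℝ V₁ + 1) := by
    rwa [mul_comm]
  have hS₂ := curvatureSum_nonneg hP.isAlgCurvatureTensor (hP.symm.apply_basis_nonneg b hnn' w₂)
  have hm : (0 : ℝ) < (Module.finrank ℝ V₂ : ℝ) ^ 2 := by positivity
  nlinarith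

theorem apply_eq_zero_of_orthonormal {n : ℕ} (b : OrthonormalBasis (Fin n) ℝ V)
    (hP : IsProductCurvature R V₁ V₂)
    (hnn : kNonnegSecondKind b R (Module.finrank ℝ V₁ * Module.finrank ℝ V₂ + 1))
    (h₂ : 0 < Module.finrank ℝ V₂) {x y : V} (hx : x ∈ V₁) (hy : y ∈ V₁)
    (hx₁ : ‖x‖ = 1) (hy₁ : ‖y‖ = 1) (hxy : ⟪x, y⟫ = 0) :
    R x y x y = 0 := by
  classical
  have : FiniteDimensional ℝ V := b.toBasis.finiteDimensional_of_finite
  have hne : (⟨x, hx⟩ : V₁) ≠ ⟨y, hy⟩ := fun h => by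
    rw [Subtype.mk.injEq] at h
    subst h
    simp [hx₁] at hxy
  have hon : Orthonormal ℝ ((↑) : ({⟨x, hx⟩, ⟨y, hy⟩} : Set V₁) → V₁) := by
    rw [orthonormal_subtype_iff_ite]
    rintro a (rfl | rfl) c (rfl | rfl) <;>
      simp [hne, hne.symm, Submodule.coe_inner, hx₁, hy₁, hxy,
        real_inner_comm x y]
  obtain ⟨s, w, hsub, hw⟩ := hon.exists_orthonormalBasis_extension
  have hle := apply_le_curvatureSum hP.isAlgCurvatureTensor (hP.apply_basis_nonneg b hnn w)
    ⟨_, hsub (Set.mem_insert _ _)⟩ ⟨_, hsub (Set.mem_insert_of_mem _ rfl)⟩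
  have hsum := hP.curvatureSum_nonpos b hnn h₂ w
  simp only [hw] at hle hsum
  linarith [hP.apply_nonneg b hnn hx hy hxy]

theorem apply_eq_zero_of_mem {n : ℕ} (b : OrthonormalBasis (Fin n) ℝ V)
    (hP : IsProductCurvature R V₁ V₂)
    (hnn : kNonnegSecondKind b R (Module.finrank ℝ V₁ * Module.finrank ℝ V₂ + 1))
    (h₂ : 0 < Module.finrank ℝ V₂) :
    ∀ x ∈ V₁, ∀ y ∈ V₁, ∀ z ∈ V₁, ∀ w ∈ V₁, R x y z w = 0 :=
  hP.isAlgCurvatureTensor.apply_eq_zero_of_apply_self fun _ hx _ hy =>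
    hP.isAlgCurvatureTensor.apply_self_eq_zero_of_orthonormal
      (fun _ hx _ hy hx₁ hy₁ hxy => hP.apply_eq_zero_of_orthonormal b hnn h₂ hx hy hx₁ hy₁ hxy)
      hx hy

lemma apply_eq_zero_of_mem_left (hP : IsProductCurvature R V₁ V₂)
    (h₁ : ∀ x ∈ V₁, ∀ y ∈ V₁, ∀ z ∈ V₁, ∀ w ∈ V₁, R x y z w = 0) {x y z w : V} (hx : x ∈ V₁)
    (hy : y ∈ V₁ ∨ y ∈ V₂) (hz : z ∈ V₁ ∨ z ∈ V₂) (hw : w ∈ V₁ ∨ w ∈ V₂) : R x y z w = 0 := by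
  have hR := hP.isAlgCurvatureTensor
  rcases hy with hy | hy
  · rcases hz with hz | hz
    · rcases hw with hw | hw
      · exact h₁ x hx y hy z hz w hw
      · rw [hR.2.1]
        exact hP.apply_eq_zero z hz w hw x y
    · linarith [hR.2.2 x y z w, hP.apply_eq_zero y hy z hz x w,
        hP.symm.apply_eq_zero z hz x hx y w]
  · exact hP.apply_eq_zero x hx y hy z w

theorem eq_zero (hP : IsProductCurvature R V₁ V₂) (hsup : V₁ ⊔ V₂ = ⊤)
    (h₁ : ∀ x ∈ V₁, ∀ y ∈ V₁, ∀ z ∈ V₁, ∀ w ∈ V₁, R x y z w = 0)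
    (h₂ : ∀ x ∈ V₂, ∀ y ∈ V₂, ∀ z ∈ V₂, ∀ w ∈ V₂, R x y z w = 0) :
    R = 0 := by
  have hspan : Submodule.span ℝ ((V₁ : Set V) ∪ V₂) = ⊤ := by
    rw [Submodule.span_union, Submodule.span_eq, Submodule.span_eq, hsup]
  refine LinearMap.ext_on hspan fun x hx => LinearMap.ext_on hspan fun y hy =>
    LinearMap.ext_on hspan fun z hz => LinearMap.ext_on hspan fun w hw => ?_
  rcases hx with hx | hx
  · exact hP.apply_eq_zero_of_mem_left h₁ hx hy hz hw
  · exact hP.symm.apply_eq_zero_of_mem_left h₂ hx hy.symm hz.symm hw.symm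

end IsProductCurvature

theorem stmt_16 {n k : ℕ}
    (b : OrthonormalBasis (Fin n) ℝ V)
    (V₁ V₂ : Submodule ℝ V)
    (hdim₁ : Module.finrank ℝ V₁ = k) (hk : 1 ≤ k)
    (hdim₂ : Module.finrank ℝ V₂ = n - k) (hnk : 1 ≤ n - k)
    (horth : ∀ x ∈ V₁, ∀ y ∈ V₂, ⟪x, y⟫ = 0)
    (hsup : V₁ ⊔ V₂ = ⊤)
    (R : V →ₗ[ℝ] V →ₗ[ℝ] V →ₗ[ℝ] V →ₗ[ℝ] ℝ)
    (hR : IsAlgCurvatureTensor R)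
    (hprod : ∀ x ∈ V₁, ∀ y ∈ V₂, ∀ z w : V, R x y z w = 0)
    (hnn : kNonnegSecondKind b R (k * (n - k) + 1)) :
    R = 0 := by
  have hP : IsProductCurvature R V₁ V₂ :=
    ⟨hR, Submodule.isOrtho_iff_inner_eq.2 horth, hprod⟩
  subst hdim₁
  rw [← hdim₂] at hnn hnk
  have hnn' : kNonnegSecondKind b R (Module.finrank ℝ V₂ * Module.finrank ℝ V₁ + 1) := by
    rwa [mul_comm]
  exact hP.eq_zero hsup (hP.apply_eq_zero_of_mem b hnn hnk)
    (hP.symm.apply_eq_zero_of_mem b hnn' hk)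
end

section
/- Let (V,⟨·,·⟩) be a real inner product space of dimension 2m ≥ 4, let J : V → V be a linear map with J² = -id and ⟨Jx,Jy⟩ = ⟨x,y⟩ for all x,y, and let R be an algebraic curvature tensor on V satisfying the Kähler identity R(x,y,z,w) = R(x,y,Jz,Jw) for all x,y,z,w. Suppose there exists β > 1 such that for every orthonormal four-frame {e_1,e_2,e_3,e_4} in V, R_{1313} + R_{1414} + R_{2323} + R_{2424} - 2βR_{1234} ≥ 0. Then for all unit vectors Z, W ∈ V with ⟨Z,W⟩ = ⟨Z,JW⟩ = 0, one has R(Z,JZ,Z,JZ) + R(W,JW,W,JW) = 0. -/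
open scoped RealInnerProductSpace

variable {V : Type*} [NormedAddCommGroup V] [InnerProductSpace ℝ V]

/-!
For a Kähler curvature tensor the Bianchi identity gives
`R(x,Jx,y,Jy) = R(x,y,x,y) + R(x,Jy,x,Jy)`, which is half the sum of sectional terms of the
orthonormal frame `(x, Jx, y, Jy)`. Applying the curvature condition to this frame and to the
frame with its last two vectors swapped yields `2β |R(x,Jx,y,Jy)| ≤ 2 R(x,Jx,y,Jy)`, so for
`β > 1` the bisectional curvature vanishes on every pair `x ⊥ y`, `x ⊥ Jy` of equal length.
The pairs `(Z + W, Z - W)` and `(Z + JW, Z - JW)` are such pairs, and a polarization identity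
expresses `2 (R(Z,JZ,Z,JZ) + R(W,JW,W,JW))` as the sum of their bisectional curvatures.
-/

namespace IsAlgCurvatureTensor

variable {R : V →ₗ[ℝ] V →ₗ[ℝ] V →ₗ[ℝ] V →ₗ[ℝ] ℝ}

theorem antisymm_right (hR : IsAlgCurvatureTensor R) (x y z w : V) :
    R x y z w = -R x y w z := by
  rw [hR.2.1 x y, hR.1 z w, hR.2.1 w z]

theorem apply_J_J (hR : IsAlgCurvatureTensor R) {J : V →ₗ[ℝ] V}
    (hK : ∀ x y z w : V, R x y z w = R x y (J z) (J w)) (x y z w : V) :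
    R (J x) (J y) z w = R x y z w := by
  rw [hR.2.1, ← hK, hR.2.1]

variable {J : V →ₗ[ℝ] V}

theorem apply_J_comm (hR : IsAlgCurvatureTensor R) (hJ2 : ∀ x : V, J (J x) = -x)
    (hK : ∀ x y z w : V, R x y z w = R x y (J z) (J w)) (x y z w : V) :
    R y (J x) z w = R x (J y) z w := by
  rw [← hR.apply_J_J hK y, hJ2, map_neg, LinearMap.neg_apply, LinearMap.neg_apply,
    hR.1 (J y), neg_neg]

theorem bisectional_eq_add (hR : IsAlgCurvatureTensor R) (hJ2 : ∀ x : V, J (J x) = -x)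
    (hK : ∀ x y z w : V, R x y z w = R x y (J z) (J w)) (x y : V) :
    R x (J x) y (J y) = R x y x y + R x (J y) x (J y) := by
  have h2 : R (J x) y x (J y) = -R x (J y) x (J y) := by
    rw [hR.1, hR.apply_J_comm hJ2 hK]
  have h3 : R y x (J x) (J y) = -R x y x y := by
    rw [← hK, hR.1]
  linarith [hR.2.2 x (J x) y (J y)]

theorem sectional_J_J (hR : IsAlgCurvatureTensor R)
    (hK : ∀ x y z w : V, R x y z w = R x y (J z) (J w)) (x y : V) :
    R (J x) (J y) (J x) (J y) = R x y x y := by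
  rw [hR.apply_J_J hK, ← hK]

theorem sectional_J_left (hR : IsAlgCurvatureTensor R) (hJ2 : ∀ x : V, J (J x) = -x)
    (hK : ∀ x y z w : V, R x y z w = R x y (J z) (J w)) (x y : V) :
    R (J x) y (J x) y = R x (J y) x (J y) := by
  rw [hR.1, hR.apply_J_comm hJ2 hK, hK x (J y) (J x), hJ2, map_neg, LinearMap.neg_apply, neg_neg]

theorem bisectional_add_sub (hR : IsAlgCurvatureTensor R) (hJ2 : ∀ x : V, J (J x) = -x)
    (hK : ∀ x y z w : V, R x y z w = R x y (J z) (J w)) (a b : V) :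
    R (a + b) (J (a + b)) (a - b) (J (a - b)) =
      R a (J a) a (J a) + R b (J b) b (J b) + 2 * R a (J a) b (J b)
        - 4 * R a (J b) a (J b) := by
  have h12 := hR.apply_J_comm hJ2 hK
  have h34 : ∀ x y z w : V, R x (J y) w (J z) = R x (J y) z (J w) := fun x y z w => by
    rw [hR.2.1, h12, hR.2.1]
  have hpair : ∀ x y z w : V, R z (J w) x (J y) = R x (J y) z (J w) := fun x y z w =>
    hR.2.1 _ _ _ _
  simp only [map_add, map_sub, LinearMap.add_apply, LinearMap.sub_apply]
  linarith [hpair a a b b, h34 a a a b, hpair a a a b, h12 a b a (J a), h34 b b a b,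
    hpair b b a b, h12 a b b (J b), h34 a b a b, h12 a b a (J b), h34 b a a b]

theorem two_mul_holomorphic_add_eq (hR : IsAlgCurvatureTensor R) (hJ2 : ∀ x : V, J (J x) = -x)
    (hK : ∀ x y z w : V, R x y z w = R x y (J z) (J w)) (a b : V) :
    2 * (R a (J a) a (J a) + R b (J b) b (J b)) =
      R (a + b) (J (a + b)) (a - b) (J (a - b))
        + R (a + J b) (J (a + J b)) (a - J b) (J (a - J b)) := by
  have hJb : R (J b) (J (J b)) (J b) (J (J b)) = R b (J b) b (J b) := by
    rw [hR.apply_J_J hK, ← hK]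
  have hJJb : R a (J (J b)) a (J (J b)) = R a b a b := by
    simp only [hJ2, map_neg, LinearMap.neg_apply, neg_neg]
  rw [hR.bisectional_add_sub hJ2 hK, hR.bisectional_add_sub hJ2 hK, hJb, hJJb, ← hK,
    hR.bisectional_eq_add hJ2 hK a b]
  ring

end IsAlgCurvatureTensor

section ComplexStructure

variable {J : V →ₗ[ℝ] V}

theorem inner_J_left (hJ2 : ∀ x : V, J (J x) = -x) (hJinner : ∀ x y : V, ⟪J x, J y⟫ = ⟪x, y⟫)
    (x y : V) : ⟪J x, y⟫ = -⟪x, J y⟫ := by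
  rw [← hJinner, hJ2, inner_neg_left]

theorem inner_self_J (hJ2 : ∀ x : V, J (J x) = -x) (hJinner : ∀ x y : V, ⟪J x, J y⟫ = ⟪x, y⟫)
    (x : V) : ⟪x, J x⟫ = 0 := by
  have h := inner_J_left hJ2 hJinner x x
  rw [real_inner_comm] at h
  linarith

theorem norm_J (hJinner : ∀ x y : V, ⟪J x, J y⟫ = ⟪x, y⟫) (x : V) : ‖J x‖ = ‖x‖ := by
  rw [norm_eq_sqrt_real_inner, hJinner, ← norm_eq_sqrt_real_inner]

theorem inner_add_J_sub (hJ2 : ∀ x : V, J (J x) = -x)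
    (hJinner : ∀ x y : V, ⟪J x, J y⟫ = ⟪x, y⟫) (a b : V) :
    ⟪a + b, J (a - b)⟫ = -2 * ⟪a, J b⟫ := by
  simp only [map_sub, inner_add_left, inner_sub_right, inner_self_J hJ2 hJinner]
  rw [real_inner_comm, inner_J_left hJ2 hJinner]
  ring

theorem orthonormal_kahlerFrame (hJ2 : ∀ x : V, J (J x) = -x)
    (hJinner : ∀ x y : V, ⟪J x, J y⟫ = ⟪x, y⟫) {x y : V} (hx : ‖x‖ = 1) (hy : ‖y‖ = 1)
    (hxy : ⟪x, y⟫ = 0) (hxJy : ⟪x, J y⟫ = 0) :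
    Orthonormal ℝ ![x, J x, y, J y] := by
  have hyJx : ⟪y, J x⟫ = 0 := by rw [real_inner_comm, inner_J_left hJ2 hJinner, hxJy, neg_zero]
  rw [orthonormal_iff_ite]
  intro i j
  fin_cases i <;> fin_cases j <;>
    simp [norm_J hJinner, inner_J_left hJ2 hJinner, inner_self_J hJ2 hJinner, hJ2, hx, hy, hxy,
      hxJy, hyJx, real_inner_comm x]

end ComplexStructure

/-- For `β = 1` this is nonnegative isotropic curvature. -/
def NonnegIsotropicCurvature (β : ℝ) (R : V →ₗ[ℝ] V →ₗ[ℝ] V →ₗ[ℝ] V →ₗ[ℝ] ℝ) : Prop :=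
  ∀ e : Fin 4 → V, Orthonormal ℝ e →
    0 ≤ R (e 0) (e 2) (e 0) (e 2) + R (e 0) (e 3) (e 0) (e 3)
        + R (e 1) (e 2) (e 1) (e 2) + R (e 1) (e 3) (e 1) (e 3)
        - 2 * β * R (e 0) (e 1) (e 2) (e 3)

namespace NonnegIsotropicCurvature

variable {β : ℝ} {R : V →ₗ[ℝ] V →ₗ[ℝ] V →ₗ[ℝ] V →ₗ[ℝ] ℝ}

theorem abs_le_sum_sectional (hIC : NonnegIsotropicCurvature β R) (hR : IsAlgCurvatureTensor R)
    {e : Fin 4 → V} (he : Orthonormal ℝ e) :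
    |2 * β * R (e 0) (e 1) (e 2) (e 3)| ≤
      R (e 0) (e 2) (e 0) (e 2) + R (e 0) (e 3) (e 0) (e 3)
        + R (e 1) (e 2) (e 1) (e 2) + R (e 1) (e 3) (e 1) (e 3) := by
  have hswap := hIC _ (he.comp _ (Equiv.swap (2 : Fin 4) 3).injective)
  simp only [Function.comp_apply, Equiv.swap_apply_left, Equiv.swap_apply_right] at hswap
  rw [Equiv.swap_apply_of_ne_of_ne (by decide) (by decide),
    Equiv.swap_apply_of_ne_of_ne (by decide) (by decide),
    hR.antisymm_right (e 0) (e 1) (e 3)] at hswap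
  have := hIC e he
  rw [_root_.abs_le]
  constructor <;> linarith

variable {J : V →ₗ[ℝ] V}

theorem bisectional_eq_zero (hIC : NonnegIsotropicCurvature β R) (hβ : 1 < β)
    (hR : IsAlgCurvatureTensor R) (hJ2 : ∀ x : V, J (J x) = -x)
    (hJinner : ∀ x y : V, ⟪J x, J y⟫ = ⟪x, y⟫)
    (hK : ∀ x y z w : V, R x y z w = R x y (J z) (J w)) {x y : V} (hx : ‖x‖ = 1)
    (hy : ‖y‖ = 1) (hxy : ⟪x, y⟫ = 0) (hxJy : ⟪x, J y⟫ = 0) :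
    R x (J x) y (J y) = 0 := by
  have h := hIC.abs_le_sum_sectional hR (orthonormal_kahlerFrame hJ2 hJinner hx hy hxy hxJy)
  simp only [Matrix.cons_val_zero, Matrix.cons_val_one, Matrix.cons_val_two,
    Matrix.cons_val_three, Matrix.head_cons, Matrix.tail_cons] at h
  rw [hR.sectional_J_left hJ2 hK, hR.sectional_J_J hK] at h
  have hC : |2 * β * R x (J x) y (J y)| ≤ 2 * R x (J x) y (J y) := by
    linarith [hR.bisectional_eq_add hJ2 hK x y]
  obtain ⟨h₁, h₂⟩ := _root_.abs_le.mp hC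
  nlinarith

theorem bisectional_eq_zero_of_norm_eq (hIC : NonnegIsotropicCurvature β R) (hβ : 1 < β)
    (hR : IsAlgCurvatureTensor R) (hJ2 : ∀ x : V, J (J x) = -x)
    (hJinner : ∀ x y : V, ⟪J x, J y⟫ = ⟪x, y⟫)
    (hK : ∀ x y z w : V, R x y z w = R x y (J z) (J w)) {x y : V} (hxy_norm : ‖x‖ = ‖y‖)
    (hxy : ⟪x, y⟫ = 0) (hxJy : ⟪x, J y⟫ = 0) :
    R x (J x) y (J y) = 0 := by
  rcases eq_or_ne x 0 with rfl | hx
  · simp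
  have hnx : 0 < ‖x‖ := norm_pos_iff.mpr hx
  have hunit : ∀ v : V, ‖v‖ = ‖x‖ → ‖‖x‖⁻¹ • v‖ = 1 := fun v hv => by
    rw [norm_smul, norm_inv, norm_norm, hv, inv_mul_cancel₀ hnx.ne']
  have h := hIC.bisectional_eq_zero hβ hR hJ2 hJinner hK (hunit x rfl) (hunit y hxy_norm.symm)
    (by simp [real_inner_smul_left, real_inner_smul_right, hxy])
    (by simp [real_inner_smul_left, real_inner_smul_right, hxJy])
  simpa [hnx.ne'] using h

end NonnegIsotropicCurvature

theorem stmt_18_general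
    (J : V →ₗ[ℝ] V)
    (hJ2 : ∀ x : V, J (J x) = -x)
    (hJinner : ∀ x y : V, ⟪J x, J y⟫ = ⟪x, y⟫)
    (R : V →ₗ[ℝ] V →ₗ[ℝ] V →ₗ[ℝ] V →ₗ[ℝ] ℝ)
    (hR : IsAlgCurvatureTensor R)
    (hKahler : ∀ x y z w : V, R x y z w = R x y (J z) (J w))
    (β : ℝ) (hβ : 1 < β)
    (hIC : ∀ e : Fin 4 → V, Orthonormal ℝ e →
      0 ≤ R (e 0) (e 2) (e 0) (e 2) + R (e 0) (e 3) (e 0) (e 3)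
          + R (e 1) (e 2) (e 1) (e 2) + R (e 1) (e 3) (e 1) (e 3)
          - 2 * β * R (e 0) (e 1) (e 2) (e 3)) :
    ∀ Z W : V, ‖Z‖ = 1 → ‖W‖ = 1 → ⟪Z, W⟫ = 0 → ⟪Z, J W⟫ = 0 →
      R Z (J Z) Z (J Z) + R W (J W) W (J W) = 0 := by
  intro Z W hZ hW hZW hZJW
  have hIC' : NonnegIsotropicCurvature β R := hIC
  have hJW : ‖J W‖ = ‖Z‖ := by rw [norm_J hJinner, hW, hZ]
  have h₁ : R (Z + W) (J (Z + W)) (Z - W) (J (Z - W)) = 0 :=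
    hIC'.bisectional_eq_zero_of_norm_eq hβ hR hJ2 hJinner hKahler
      (norm_sub_eq_norm_add (by rwa [real_inner_comm])).symm
      ((real_inner_add_sub_eq_zero_iff Z W).mpr (hZ.trans hW.symm))
      (by rw [inner_add_J_sub hJ2 hJinner, hZJW, mul_zero])
  have h₂ : R (Z + J W) (J (Z + J W)) (Z - J W) (J (Z - J W)) = 0 :=
    hIC'.bisectional_eq_zero_of_norm_eq hβ hR hJ2 hJinner hKahler
      (norm_sub_eq_norm_add (by rwa [real_inner_comm])).symm
      ((real_inner_add_sub_eq_zero_iff Z (J W)).mpr hJW.symm)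
      (by rw [inner_add_J_sub hJ2 hJinner, hJ2, inner_neg_right, hZW, neg_zero, mul_zero])
  linarith [hR.two_mul_holomorphic_add_eq hJ2 hKahler Z W]

theorem stmt_18 {m : ℕ} (hm : 2 ≤ m)
    (hdim : Module.finrank ℝ V = 2 * m)
    (J : V →ₗ[ℝ] V)
    (hJ2 : ∀ x : V, J (J x) = -x)
    (hJinner : ∀ x y : V, ⟪J x, J y⟫ = ⟪x, y⟫)
    (R : V →ₗ[ℝ] V →ₗ[ℝ] V →ₗ[ℝ] V →ₗ[ℝ] ℝ)
    (hR : IsAlgCurvatureTensor R)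
    (hKahler : ∀ x y z w : V, R x y z w = R x y (J z) (J w))
    (β : ℝ) (hβ : 1 < β)
    (hIC : ∀ e : Fin 4 → V, Orthonormal ℝ e →
      0 ≤ R (e 0) (e 2) (e 0) (e 2) + R (e 0) (e 3) (e 0) (e 3)
          + R (e 1) (e 2) (e 1) (e 2) + R (e 1) (e 3) (e 1) (e 3)
          - 2 * β * R (e 0) (e 1) (e 2) (e 3)) :
    ∀ Z W : V, ‖Z‖ = 1 → ‖W‖ = 1 → ⟪Z, W⟫ = 0 → ⟪Z, J W⟫ = 0 →
      R Z (J Z) Z (J Z) + R W (J W) W (J W) = 0 :=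
  stmt_18_general J hJ2 hJinner R hR hKahler β hβ hIC
end
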